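/- arXiv:2006.10906 — 7 statements merged into one kernel-verified Lean document; each statement's English description precedes it below -/
import Mathlib

section
/- There are no real numbers a, b such that a² + ab + b² < 1, (a-1)² + (a-1)(b-1) + (b-1)² < 1, (a-1)² + (a-1)b + b² ≥ 1, and a² + a(b-1) + (b-1)² ≥ 1 all hold simultaneously. -/
/-! With `N x y = x² + xy + y²`, the four values satisfy the linear identity
`N (a-1) b + N a (b-1) + 1 = N a b + N (a-1) (b-1)`, so the two "far" values sum to
less than `1 + 1 - 1 = 1`, while by hypothesis they sum to at least `2`. -/

theorem eisenstein_norm_far_add_one_eq_near {R : Type*} [CommRing R] (a b : R) :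
    ((a - 1) ^ 2 + (a - 1) * b + b ^ 2) + (a ^ 2 + a * (b - 1) + (b - 1) ^ 2) + 1 =
      (a ^ 2 + a * b + b ^ 2) + ((a - 1) ^ 2 + (a - 1) * (b - 1) + (b - 1) ^ 2) := by
  ring

theorem stmt3 : ¬ ∃ a b : ℝ,
    a ^ 2 + a * b + b ^ 2 < 1 ∧
    (a - 1) ^ 2 + (a - 1) * (b - 1) + (b - 1) ^ 2 < 1 ∧
    (a - 1) ^ 2 + (a - 1) * b + b ^ 2 ≥ 1 ∧
    a ^ 2 + a * (b - 1) + (b - 1) ^ 2 ≥ 1 := by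
  rintro ⟨a, b, h₁, h₂, h₃, h₄⟩
  linarith [eisenstein_norm_far_add_one_eq_near a b]
end

section
/- Let z be a complex number. Define the graph G_z whose vertices are the Gaussian integers x with |x - z| < 1, with an edge between x and y if and only if x - y is a unit of ℤ[i]. Then G_z is connected. -/
/-- `z` is a Gaussian integer (as an element of `ℂ`). -/
def IsGaussianInt (z : ℂ) : Prop := ∃ a b : ℤ, z = (a : ℂ) + (b : ℂ) * Complex.I

/-- `u` is a unit of `ℤ[i]`. -/
def IsGaussianUnit (u : ℂ) : Prop := u = 1 ∨ u = Complex.I ∨ u = -1 ∨ u = -Complex.I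

/-- The edge relation of the graph `G_z`: both endpoints are Gaussian integers within
distance `1` of `z`, and they differ by a unit. -/
def GaussEdge (z x y : ℂ) : Prop :=
  IsGaussianInt x ∧ IsGaussianInt y ∧ ‖x - z‖ < 1 ∧ ‖y - z‖ < 1 ∧
    IsGaussianUnit (x - y)

/-!
Two Gaussian integers in the open unit disc about `z` differ by less than `2` in each coordinate,
hence by at most `1`. If they differ in both coordinates, they are opposite corners of a unit
square; the squared distances from `z` of the two other corners add up to the same total as those
of `x` and `y`, which is less than `2`, so one of those corners lies in the disc as well and
joins `x` to `y` by two unit steps.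
-/

open Complex

lemma norm_mk_sub_lt_or_norm_mk_sub_lt {x y z : ℂ} {r : ℝ} (hx : ‖x - z‖ < r)
    (hy : ‖y - z‖ < r) : ‖(⟨y.re, x.im⟩ : ℂ) - z‖ < r ∨ ‖(⟨x.re, y.im⟩ : ℂ) - z‖ < r := by
  have hr : 0 ≤ r := (norm_nonneg _).trans hx.le
  have sq_norm_sub (w : ℂ) : ‖w - z‖ ^ 2 = (w.re - z.re) ^ 2 + (w.im - z.im) ^ 2 := by
    rw [Complex.sq_norm, normSq_apply, sub_re, sub_im]; ring
  have hx2 := pow_lt_pow_left₀ hx (norm_nonneg _) two_ne_zero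
  have hy2 := pow_lt_pow_left₀ hy (norm_nonneg _) two_ne_zero
  by_contra! h
  have h₁ := pow_le_pow_left₀ hr h.1 2
  have h₂ := pow_le_pow_left₀ hr h.2 2
  rw [sq_norm_sub] at hx2 hy2 h₁ h₂
  linarith

lemma abs_sub_le_one_of_norm_sub_lt_one {z : ℂ} {a b c d : ℤ}
    (hx : ‖(a : ℂ) + b * I - z‖ < 1) (hy : ‖(c : ℂ) + d * I - z‖ < 1) :
    |a - c| ≤ 1 ∧ |b - d| ≤ 1 := by
  have hxy : ‖(a : ℂ) + b * I - (c + d * I)‖ < 2 := by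
    linarith [norm_sub_le_norm_sub_add_norm_sub ((a : ℂ) + b * I) z (c + d * I),
      norm_sub_rev z ((c : ℂ) + d * I)]
  have hre := (abs_re_le_norm _).trans_lt hxy
  have him := (abs_im_le_norm _).trans_lt hxy
  simp only [sub_re, sub_im, add_re, add_im, intCast_re, intCast_im, mul_re, mul_im, I_re,
    I_im, mul_zero, mul_one, sub_zero, zero_add, add_zero] at hre him
  have hac : |a - c| < 2 := by exact_mod_cast hre
  have hbd : |b - d| < 2 := by exact_mod_cast him
  omega

lemma isGaussianUnit_of_abs_add_abs_eq_one {p q : ℤ} (h : |p| + |q| = 1) :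
    IsGaussianUnit (p + q * I) := by
  have hpq : ((p = 1 ∨ p = -1) ∧ q = 0) ∨ (p = 0 ∧ (q = 1 ∨ q = -1)) := by
    rcases abs_cases p with ⟨hp, _⟩ | ⟨hp, _⟩ <;> rcases abs_cases q with ⟨hq, _⟩ | ⟨hq, _⟩ <;>
      omega
  rcases hpq with ⟨rfl | rfl, rfl⟩ | ⟨rfl, rfl | rfl⟩ <;> simp [IsGaussianUnit]

lemma gaussEdge_of_abs_add_abs_eq_one {z : ℂ} {a b c d : ℤ}
    (hx : ‖(a : ℂ) + b * I - z‖ < 1) (hy : ‖(c : ℂ) + d * I - z‖ < 1)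
    (h : |a - c| + |b - d| = 1) : GaussEdge z (a + b * I) (c + d * I) := by
  refine ⟨⟨a, b, rfl⟩, ⟨c, d, rfl⟩, hx, hy, ?_⟩
  have hsub : (a : ℂ) + b * I - (c + d * I) = ((a - c : ℤ) : ℂ) + ((b - d : ℤ) : ℂ) * I := by
    push_cast; ring
  exact hsub ▸ isGaussianUnit_of_abs_add_abs_eq_one h

lemma norm_corner_sub_lt_one_or {z : ℂ} {a b c d : ℤ}
    (hx : ‖(a : ℂ) + b * I - z‖ < 1) (hy : ‖(c : ℂ) + d * I - z‖ < 1) :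
    ‖(c : ℂ) + b * I - z‖ < 1 ∨ ‖(a : ℂ) + d * I - z‖ < 1 := by
  have corner (p q : ℤ) : (⟨p, q⟩ : ℂ) = p + q * I := ext (by simp) (by simp)
  simpa [corner] using norm_mk_sub_lt_or_norm_mk_sub_lt hx hy

theorem stmt5 (z : ℂ) (x y : ℂ) (hx : IsGaussianInt x) (hy : IsGaussianInt y)
    (hxz : ‖x - z‖ < 1) (hyz : ‖y - z‖ < 1) :
    Relation.ReflTransGen (GaussEdge z) x y := by
  obtain ⟨a, b, rfl⟩ := hx
  obtain ⟨c, d, rfl⟩ := hy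
  obtain ⟨hac, hbd⟩ := abs_sub_le_one_of_norm_sub_lt_one hxz hyz
  have := abs_nonneg (a - c)
  have := abs_nonneg (b - d)
  obtain h₀ | h₁ | ⟨hac₁, hbd₁⟩ :
      (|a - c| = 0 ∧ |b - d| = 0) ∨ |a - c| + |b - d| = 1 ∨ (|a - c| = 1 ∧ |b - d| = 1) := by
    omega
  · rw [abs_eq_zero, abs_eq_zero, sub_eq_zero, sub_eq_zero] at h₀
    rw [h₀.1, h₀.2]
  · exact .single (gaussEdge_of_abs_add_abs_eq_one hxz hyz h₁)
  · rcases norm_corner_sub_lt_one_or hxz hyz with hcb | had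
    · exact .head (gaussEdge_of_abs_add_abs_eq_one hxz hcb (by simp [hac₁]))
        (.single (gaussEdge_of_abs_add_abs_eq_one hcb hyz (by simp [hbd₁])))
    · exact .head (gaussEdge_of_abs_add_abs_eq_one hxz had (by simp [hbd₁]))
        (.single (gaussEdge_of_abs_add_abs_eq_one had hyz (by simp [hac₁])))
end

section
/- Let z be a complex number. Define the graph G_z whose vertices are the Eisenstein integers x with |x - z| < 1, with an edge between x and y if and only if x - y is a unit of ℤ[ρ]. Then G_z is connected. -/
noncomputable def ρ : ℂ := (1 + Real.sqrt 3 * Complex.I) / 2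

/-- `z` is an Eisenstein integer (as an element of `ℂ`). -/
def IsEisensteinInt (z : ℂ) : Prop := ∃ a b : ℤ, z = (a : ℂ) + (b : ℂ) * ρ

/-- `u` is a unit of `ℤ[ρ]`, i.e. a sixth root of unity. -/
def IsEisensteinUnit (u : ℂ) : Prop := ∃ k : Fin 6, u = ρ ^ (k : ℕ)

/-- The edge relation of the graph `G_z`: both endpoints are Eisenstein integers within
distance `1` of `z`, and they differ by a unit. -/
def EisEdge (z x y : ℂ) : Prop :=
  IsEisensteinInt x ∧ IsEisensteinInt y ∧ ‖x - z‖ < 1 ∧ ‖y - z‖ < 1 ∧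
    IsEisensteinUnit (x - y)

/-! Two vertices `x`, `y` lie in the open unit disc around `z`, so `‖x - y‖ < 2` and the norm
`a² + ab + b²` of `x - y` is `0`, `1` or `3` (`2` is not a norm). In the first two cases `x = y` or
`x`, `y` are adjacent. In the last, `x - y = u + v` with units `u`, `v`, and the third vertex `y + u`
of the rhombus is also in the disc: by the parallelogram law the midpoint of `x` and `y` is within
`1/2` of `z`, and `y + u` is at distance `1/2` from that midpoint. -/

theorem norm_sub_lt_of_near_both {E : Type*} [NormedAddCommGroup E] [InnerProductSpace ℝ E]
    {x y z p : E} {r : ℝ} (hxz : ‖x - z‖ < r) (hyz : ‖y - z‖ < r)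
    (hxp : ‖x - p‖ ≤ r) (hyp : ‖y - p‖ ≤ r) (hxy : 3 * r ^ 2 ≤ ‖x - y‖ ^ 2) :
    ‖p - z‖ < r := by
  have hz := parallelogram_law_with_norm ℝ (x - z) (y - z)
  have hp := parallelogram_law_with_norm ℝ (x - p) (y - p)
  rw [show x - z - (y - z) = x - y by abel] at hz
  rw [show x - p - (y - p) = x - y by abel] at hp
  -- `x - z + (y - z)` and `x - p + (y - p)` are twice the vectors from `z` and `p` to the midpoint
  have hz' : ‖x - z + (y - z)‖ < r := by
    nlinarith [norm_nonneg (x - z), norm_nonneg (y - z), norm_nonneg (x - z + (y - z))]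
  have hp' : ‖x - p + (y - p)‖ ≤ r := by
    nlinarith [norm_nonneg (x - p), norm_nonneg (y - p), norm_nonneg (x - p + (y - p))]
  have htwice : (2 : ℝ) * ‖p - z‖ ≤ ‖x - z + (y - z)‖ + ‖x - p + (y - p)‖ := by
    calc (2 : ℝ) * ‖p - z‖ = ‖(x - z + (y - z)) - (x - p + (y - p))‖ := by
          rw [← Real.norm_two, ← norm_smul, two_smul]; congr 1; abel
      _ ≤ _ := norm_sub_le _ _
  linarith

namespace Eisenstein

lemma rho_sq : ρ ^ 2 = ρ - 1 := by
  have h3 : Real.sqrt 3 ^ 2 = 3 := Real.sq_sqrt (by norm_num)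
  apply Complex.ext <;> simp [ρ, pow_two] <;> nlinarith [h3]

lemma rho_pow_three : ρ ^ 3 = -1 := by
  linear_combination (ρ + 1) * rho_sq

lemma normSq_add_mul_rho (a b : ℝ) : Complex.normSq (a + b * ρ) = a ^ 2 + a * b + b ^ 2 := by
  have h3 : Real.sqrt 3 ^ 2 = 3 := Real.sq_sqrt (by norm_num)
  simp [Complex.normSq_apply, ρ]
  linear_combination (b ^ 2 / 4) * h3

lemma norm_sq_intCast_add_mul_rho (a b : ℤ) :
    ‖(a : ℂ) + b * ρ‖ ^ 2 = ((a ^ 2 + a * b + b ^ 2 : ℤ) : ℝ) := by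
  rw [Complex.sq_norm]
  exact_mod_cast normSq_add_mul_rho a b

lemma three_mul_sq_le_norm_form (a b : ℤ) : 3 * a ^ 2 ≤ 4 * (a ^ 2 + a * b + b ^ 2) := by
  nlinarith [sq_nonneg (a + 2 * b)]

lemma norm_form_lt_four {a b : ℤ} (h : a ^ 2 + a * b + b ^ 2 < 4) :
    a ^ 2 + a * b + b ^ 2 = 0 ∨ a ^ 2 + a * b + b ^ 2 = 1 ∨ a ^ 2 + a * b + b ^ 2 = 3 := by
  have ha := three_mul_sq_le_norm_form a b
  have hb := three_mul_sq_le_norm_form b a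
  obtain ⟨ha₁, ha₂⟩ : -2 ≤ a ∧ a ≤ 2 := ⟨by nlinarith, by nlinarith⟩
  obtain ⟨hb₁, hb₂⟩ : -2 ≤ b ∧ b ≤ 2 := ⟨by nlinarith, by nlinarith⟩
  interval_cases a <;> interval_cases b <;> omega

lemma exists_norm_form_eq_one_of_eq_three {a b : ℤ} (h : a ^ 2 + a * b + b ^ 2 = 3) :
    ∃ c d : ℤ, c ^ 2 + c * d + d ^ 2 = 1 ∧ (a - c) ^ 2 + (a - c) * (b - d) + (b - d) ^ 2 = 1 := by
  have ha := three_mul_sq_le_norm_form a b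
  have hb := three_mul_sq_le_norm_form b a
  obtain ⟨ha₁, ha₂⟩ : -2 ≤ a ∧ a ≤ 2 := ⟨by nlinarith, by nlinarith⟩
  obtain ⟨hb₁, hb₂⟩ : -2 ≤ b ∧ b ≤ 2 := ⟨by nlinarith, by nlinarith⟩
  interval_cases a <;> interval_cases b <;> norm_num at h
  exacts [⟨-1, 0, by norm_num⟩, ⟨-1, 0, by norm_num⟩, ⟨0, 1, by norm_num⟩, ⟨0, -1, by norm_num⟩,
    ⟨1, 0, by norm_num⟩, ⟨1, 0, by norm_num⟩]

lemma isEisensteinUnit_of_norm_form_eq_one {a b : ℤ} (h : a ^ 2 + a * b + b ^ 2 = 1) :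
    IsEisensteinUnit (a + b * ρ) := by
  have ha := three_mul_sq_le_norm_form a b
  have hb := three_mul_sq_le_norm_form b a
  obtain ⟨ha₁, ha₂⟩ : -1 ≤ a ∧ a ≤ 1 := ⟨by nlinarith, by nlinarith⟩
  obtain ⟨hb₁, hb₂⟩ : -1 ≤ b ∧ b ≤ 1 := ⟨by nlinarith, by nlinarith⟩
  interval_cases a <;> interval_cases b <;> norm_num at h
  exacts [⟨3, by norm_num; linear_combination -rho_pow_three⟩,
    ⟨2, by norm_num; linear_combination -rho_sq⟩,
    ⟨4, by norm_num; linear_combination -ρ * rho_pow_three⟩,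
    ⟨1, by norm_num⟩,
    ⟨5, by norm_num; linear_combination rho_sq - ρ ^ 2 * rho_pow_three⟩,
    ⟨0, by norm_num⟩]

end Eisenstein

open Eisenstein

namespace IsEisensteinInt

lemma add {x y : ℂ} (hx : IsEisensteinInt x) (hy : IsEisensteinInt y) :
    IsEisensteinInt (x + y) := by
  obtain ⟨a, b, rfl⟩ := hx
  obtain ⟨c, d, rfl⟩ := hy
  exact ⟨a + c, b + d, by push_cast; ring⟩

lemma sub {x y : ℂ} (hx : IsEisensteinInt x) (hy : IsEisensteinInt y) :
    IsEisensteinInt (x - y) := by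
  obtain ⟨a, b, rfl⟩ := hx
  obtain ⟨c, d, rfl⟩ := hy
  exact ⟨a - c, b - d, by push_cast; ring⟩

lemma isEisensteinUnit {u : ℂ} (hu : IsEisensteinInt u) (h : ‖u‖ = 1) : IsEisensteinUnit u := by
  obtain ⟨a, b, rfl⟩ := hu
  have hN := norm_sq_intCast_add_mul_rho a b
  rw [h, one_pow] at hN
  exact isEisensteinUnit_of_norm_form_eq_one (by exact_mod_cast hN.symm)

lemma eq_zero_or_norm_eq_one_or_sq_norm_eq_three {u : ℂ} (hu : IsEisensteinInt u)
    (h : ‖u‖ < 2) : u = 0 ∨ ‖u‖ = 1 ∨ ‖u‖ ^ 2 = 3 := by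
  obtain ⟨a, b, rfl⟩ := hu
  have hN := norm_sq_intCast_add_mul_rho a b
  have h4 : a ^ 2 + a * b + b ^ 2 < 4 := by
    have : ‖(a : ℂ) + b * ρ‖ ^ 2 < 2 ^ 2 := by gcongr
    exact_mod_cast hN ▸ this
  rcases norm_form_lt_four h4 with h0 | h1 | h3
  · left
    rw [h0, Int.cast_zero, sq_eq_zero_iff, norm_eq_zero] at hN
    exact hN
  · right; left
    rw [h1, Int.cast_one, pow_eq_one_iff_of_nonneg (norm_nonneg _) two_ne_zero] at hN
    exact hN
  · right; right
    rw [hN, h3]; norm_num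

lemma exists_norm_eq_one_sub {u : ℂ} (hu : IsEisensteinInt u) (h : ‖u‖ ^ 2 = 3) :
    ∃ v : ℂ, IsEisensteinInt v ∧ ‖v‖ = 1 ∧ ‖u - v‖ = 1 := by
  obtain ⟨a, b, rfl⟩ := hu
  rw [norm_sq_intCast_add_mul_rho] at h
  obtain ⟨c, d, hcd, hrest⟩ := exists_norm_form_eq_one_of_eq_three (by exact_mod_cast h)
  have norm_eq_one {m n : ℤ} (hmn : m ^ 2 + m * n + n ^ 2 = 1) : ‖(m : ℂ) + n * ρ‖ = 1 := by
    rw [← pow_eq_one_iff_of_nonneg (norm_nonneg _) two_ne_zero, norm_sq_intCast_add_mul_rho, hmn,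
      Int.cast_one]
  refine ⟨c + d * ρ, ⟨c, d, rfl⟩, norm_eq_one hcd, ?_⟩
  convert norm_eq_one hrest using 2
  push_cast; ring

end IsEisensteinInt

theorem stmt6 (z : ℂ) (x y : ℂ) (hx : IsEisensteinInt x) (hy : IsEisensteinInt y)
    (hxz : ‖x - z‖ < 1) (hyz : ‖y - z‖ < 1) :
    Relation.ReflTransGen (EisEdge z) x y := by
  have hxy : ‖x - y‖ < 2 := by
    calc ‖x - y‖ ≤ ‖x - z‖ + ‖y - z‖ := by simpa only [dist_eq_norm] using dist_triangle_right x y z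
      _ < 2 := by linarith
  rcases (hx.sub hy).eq_zero_or_norm_eq_one_or_sq_norm_eq_three hxy with h0 | h1 | h3
  · rw [sub_eq_zero.mp h0]
  · exact .single ⟨hx, hy, hxz, hyz, (hx.sub hy).isEisensteinUnit h1⟩
  · obtain ⟨u, hu, hu1, hxyu⟩ := (hx.sub hy).exists_norm_eq_one_sub h3
    have hp := hy.add hu
    have hxp : x - (y + u) = x - y - u := by ring
    have hpz : ‖y + u - z‖ < 1 :=
      norm_sub_lt_of_near_both hxz hyz (by rw [hxp, hxyu]) (by simp [hu1]) (by rw [h3]; norm_num)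
    refine .head ⟨hx, hp, hxz, hpz, ?_⟩ (.single ⟨hp, hy, hpz, hyz, ?_⟩)
    · rw [hxp]; exact (hx.sub hy |>.sub hu).isEisensteinUnit hxyu
    · rw [add_sub_cancel_left]; exact hu.isEisensteinUnit hu1
end

section
/- For any complex numbers z₁, z₂ there exist Gaussian integers r₁, r₂ such that |z₁ - r₁| < 1, |z₂ - r₂| < 1, and |(z₁ - r₁) + (z₂ - r₂)| < 1. -/
section

variable {α : Type*} [Field α] [LinearOrder α] [IsStrictOrderedRing α]

lemma exists_int_abs_sub_le_two_thirds_of_abs_le_half {a b : α} (ha : |a| ≤ 1 / 2)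
    (hb : |b| ≤ 1 / 2) :
    ∃ i j : ℤ, |a - i| ≤ 2 / 3 ∧ |b - j| ≤ 2 / 3 ∧ |a - i + (b - j)| ≤ 2 / 3 := by
  rw [abs_le] at ha hb
  rcases le_or_gt (a + b) (2 / 3) with hle | hgt
  · rcases le_or_gt (-(2 / 3)) (a + b) with hge | hlt
    · refine ⟨0, 0, ?_, ?_, ?_⟩ <;> push_cast <;> rw [abs_le] <;> constructor <;> linarith
    · rcases le_total a b with h | h
      · refine ⟨-1, 0, ?_, ?_, ?_⟩ <;> push_cast <;> rw [abs_le] <;> constructor <;> linarith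
      · refine ⟨0, -1, ?_, ?_, ?_⟩ <;> push_cast <;> rw [abs_le] <;> constructor <;> linarith
  · rcases le_total a b with h | h
    · refine ⟨0, 1, ?_, ?_, ?_⟩ <;> push_cast <;> rw [abs_le] <;> constructor <;> linarith
    · refine ⟨1, 0, ?_, ?_, ?_⟩ <;> push_cast <;> rw [abs_le] <;> constructor <;> linarith

variable [FloorRing α]

lemma exists_int_abs_sub_le_two_thirds (x y : α) :
    ∃ n m : ℤ, |x - n| ≤ 2 / 3 ∧ |y - m| ≤ 2 / 3 ∧ |x - n + (y - m)| ≤ 2 / 3 := by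
  obtain ⟨i, j, hi, hj, hij⟩ :=
    exists_int_abs_sub_le_two_thirds_of_abs_le_half (abs_sub_round x) (abs_sub_round y)
  refine ⟨round x + i, round y + j, ?_, ?_, ?_⟩ <;> push_cast <;> simpa only [sub_add_eq_sub_sub]

end

lemma Complex.norm_lt_one_of_abs_re_le_of_abs_im_le {w : ℂ} (hre : |w.re| ≤ 2 / 3)
    (him : |w.im| ≤ 2 / 3) : ‖w‖ < 1 := by
  have hsq : ‖w‖ ^ 2 = w.re ^ 2 + w.im ^ 2 := by
    rw [Complex.sq_norm, Complex.normSq_apply]; ring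
  have hre2 : w.re ^ 2 ≤ (2 / 3) ^ 2 := sq_le_sq' (abs_le.mp hre).1 (abs_le.mp hre).2
  have him2 : w.im ^ 2 ≤ (2 / 3) ^ 2 := sq_le_sq' (abs_le.mp him).1 (abs_le.mp him).2
  nlinarith [norm_nonneg w]

theorem stmt7 (z₁ z₂ : ℂ) :
    ∃ r₁ r₂ : ℂ, IsGaussianInt r₁ ∧ IsGaussianInt r₂ ∧
      ‖z₁ - r₁‖ < 1 ∧ ‖z₂ - r₂‖ < 1 ∧
      ‖(z₁ - r₁) + (z₂ - r₂)‖ < 1 := by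
  obtain ⟨n₁, n₂, hre₁, hre₂, hre⟩ := exists_int_abs_sub_le_two_thirds z₁.re z₂.re
  obtain ⟨m₁, m₂, him₁, him₂, him⟩ := exists_int_abs_sub_le_two_thirds z₁.im z₂.im
  refine ⟨n₁ + m₁ * Complex.I, n₂ + m₂ * Complex.I, ⟨n₁, m₁, rfl⟩, ⟨n₂, m₂, rfl⟩, ?_, ?_, ?_⟩ <;>
    apply Complex.norm_lt_one_of_abs_re_le_of_abs_im_le <;> simpa
end

section
/- For any complex numbers z₁, z₂ there exist Eisenstein integers r₁, r₂ such that |z₁ - r₁| < 1, |z₂ - r₂| < 1, and |(z₁ - r₁) + (z₂ - r₂)| < 1. -/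
lemma ρ_re : ρ.re = 1 / 2 := by simp [ρ]

lemma ρ_im : ρ.im = Real.sqrt 3 / 2 := by simp [ρ]

lemma norm_sq_add_mul_ρ (u v : ℝ) : ‖(u : ℂ) + v * ρ‖ ^ 2 = u ^ 2 + u * v + v ^ 2 := by
  have h3 : Real.sqrt 3 ^ 2 = 3 := Real.sq_sqrt (by norm_num)
  rw [Complex.sq_norm, Complex.normSq_apply]
  simp only [Complex.add_re, Complex.add_im, Complex.mul_re, Complex.mul_im, Complex.ofReal_re,
    Complex.ofReal_im, ρ_re, ρ_im]
  linear_combination v ^ 2 / 4 * h3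

lemma exists_eq_add_mul_ρ (z : ℂ) : ∃ u v : ℝ, z = u + v * ρ := by
  have h3 : Real.sqrt 3 ≠ 0 := by positivity
  refine ⟨z.re - z.im / Real.sqrt 3, 2 * z.im / Real.sqrt 3, Complex.ext ?_ ?_⟩
  · simp only [Complex.add_re, Complex.mul_re, Complex.ofReal_re, Complex.ofReal_im, ρ_re, ρ_im]
    ring
  · simp only [Complex.add_im, Complex.mul_im, Complex.ofReal_re, Complex.ofReal_im, ρ_re, ρ_im]
    field_simp
    ring

/-- The barycentric average of the squared distances from `(u, v)` to the vertices `0, 1, ρ`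
is `u + v - ‖u + vρ‖²`, which is at most `1/3`, the squared circumradius. -/
lemma exists_vertex_sq_le_third {u v : ℝ} (hu : 0 ≤ u) (hv : 0 ≤ v) (huv : u + v ≤ 1) :
    ∃ a b : ℤ, (u - a) ^ 2 + (u - a) * (v - b) + (v - b) ^ 2 ≤ 1 / 3 := by
  by_contra! h
  have h₀ := h 0 0
  have h₁ := h 1 0
  have h₂ := h 0 1
  push_cast at h₀ h₁ h₂
  nlinarith [mul_le_mul_of_nonneg_left h₁.le hu, mul_le_mul_of_nonneg_left h₂.le hv,
    mul_le_mul_of_nonneg_left h₀.le (sub_nonneg.2 huv),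
    sq_nonneg (u - v), sq_nonneg (u + v - 2 / 3)]

lemma exists_int_sq_le_third (u v : ℝ) :
    ∃ a b : ℤ, (u - a) ^ 2 + (u - a) * (v - b) + (v - b) ^ 2 ≤ 1 / 3 := by
  have hu := Int.fract_nonneg u
  have hv := Int.fract_nonneg v
  have hu' := Int.fract_lt_one u
  have hv' := Int.fract_lt_one v
  rcases le_or_gt (Int.fract u + Int.fract v) 1 with h | h
  · obtain ⟨a, b, hab⟩ := exists_vertex_sq_le_third hu hv h
    refine ⟨⌊u⌋ + a, ⌊v⌋ + b, Eq.trans_le ?_ hab⟩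
    simp only [Int.fract]
    push_cast
    ring
  · obtain ⟨a, b, hab⟩ :=
      exists_vertex_sq_le_third (sub_nonneg.2 hu'.le) (sub_nonneg.2 hv'.le) (by linarith)
    refine ⟨⌊u⌋ + 1 - a, ⌊v⌋ + 1 - b, Eq.trans_le ?_ hab⟩
    simp only [Int.fract]
    push_cast
    ring

lemma exists_isEisensteinInt_norm_sq_le (z : ℂ) : ∃ r, IsEisensteinInt r ∧ ‖z - r‖ ^ 2 ≤ 1 / 3 := by
  obtain ⟨u, v, rfl⟩ := exists_eq_add_mul_ρ z
  obtain ⟨a, b, hab⟩ := exists_int_sq_le_third u v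
  refine ⟨a + b * ρ, ⟨a, b, rfl⟩, ?_⟩
  have hz : (u : ℂ) + v * ρ - (a + b * ρ) = ((u - a : ℝ) : ℂ) + ((v - b : ℝ) : ℂ) * ρ := by
    push_cast
    ring
  rwa [hz, norm_sq_add_mul_ρ]

lemma norm_lt_of_norm_sq_le_third {E : Type*} [SeminormedAddGroup E] {x : E}
    (h : ‖x‖ ^ 2 ≤ 1 / 3) : ‖x‖ < 3 / 5 := by
  nlinarith [norm_nonneg x]

lemma norm_lt_of_norm_add_half_lt {E : Type*} [SeminormedAddCommGroup E] [Module ℝ E]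
    [NormSMulClass ℝ E] {w₁ w₂ : E} {s t : ℝ} (h₁ : ‖w₁‖ < s) (h₂ : ‖w₂ + (1 / 2 : ℝ) • w₁‖ < t) :
    ‖w₂‖ < t + s / 2 ∧ ‖w₁ + w₂‖ < t + s / 2 := by
  have hhalf : ‖(1 / 2 : ℝ) • w₁‖ < s / 2 := by
    rw [norm_smul, Real.norm_of_nonneg (by norm_num)]
    linarith
  constructor
  · calc ‖w₂‖ = ‖(w₂ + (1 / 2 : ℝ) • w₁) - (1 / 2 : ℝ) • w₁‖ := by rw [add_sub_cancel_right]
      _ ≤ ‖w₂ + (1 / 2 : ℝ) • w₁‖ + ‖(1 / 2 : ℝ) • w₁‖ := norm_sub_le _ _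
      _ < t + s / 2 := add_lt_add h₂ hhalf
  · calc ‖w₁ + w₂‖ = ‖(w₂ + (1 / 2 : ℝ) • w₁) + (1 / 2 : ℝ) • w₁‖ := by
          congr 1
          rw [add_assoc, ← add_smul]
          norm_num [add_comm]
      _ ≤ ‖w₂ + (1 / 2 : ℝ) • w₁‖ + ‖(1 / 2 : ℝ) • w₁‖ := norm_add_le _ _
      _ < t + s / 2 := add_lt_add h₂ hhalf

theorem stmt8 (z₁ z₂ : ℂ) :
    ∃ r₁ r₂ : ℂ, IsEisensteinInt r₁ ∧ IsEisensteinInt r₂ ∧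
      ‖z₁ - r₁‖ < 1 ∧ ‖z₂ - r₂‖ < 1 ∧
      ‖(z₁ - r₁) + (z₂ - r₂)‖ < 1 := by
  obtain ⟨r₁, hr₁, h₁⟩ := exists_isEisensteinInt_norm_sq_le z₁
  obtain ⟨r₂, hr₂, h₂⟩ := exists_isEisensteinInt_norm_sq_le (z₂ + (1 / 2 : ℝ) • (z₁ - r₁))
  have hw₁ := norm_lt_of_norm_sq_le_third h₁
  rw [add_sub_right_comm] at h₂
  obtain ⟨hw₂, hw₁₂⟩ := norm_lt_of_norm_add_half_lt hw₁ (norm_lt_of_norm_sq_le_third h₂)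
  exact ⟨r₁, r₂, hr₁, hr₂, by linarith, by linarith, by linarith⟩
end

section
/- In the ring ℤ[√7], the element √7 is not a finite sum of units. -/
/-!
A unit of `ℤ[√7]` has norm `a² - 7b² = ±1`. Norm `-1` is impossible since `-1` is not a square
modulo `7`, and norm `1` forces `3 ∣ b`, because in `ZMod 3` the equation `a² - b² = 1` forces
`b = 0`. Hence every sum of units has `√7`-coordinate divisible by `3`, while `√7` has
coordinate `1`.
-/

namespace Zsqrtd

variable {d : ℤ}

theorem im_sum {ι : Type*} (s : Finset ι) (f : ι → ℤ√d) : (∑ i ∈ s, f i).im = ∑ i ∈ s, (f i).im :=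
  map_sum (⟨⟨im, im_zero⟩, im_add⟩ : ℤ√d →+ ℤ) f s

theorem norm_ne_neg_one_of_seven_dvd (hd : 7 ∣ d) (z : ℤ√d) : z.norm ≠ -1 := by
  intro hz
  have hd7 : (d : ZMod 7) = 0 := (ZMod.intCast_zmod_eq_zero_iff_dvd d 7).mpr hd
  have hsq : (z.re : ZMod 7) ^ 2 = -1 := by
    have := congrArg (Int.cast : ℤ → ZMod 7) hz
    rw [norm_def] at this
    push_cast [hd7] at this
    linear_combination this
  exact (by decide : ∀ a : ZMod 7, a ^ 2 ≠ -1) _ hsq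

theorem three_dvd_im_of_norm_eq_one (hd : d ≡ 1 [ZMOD 3]) {z : ℤ√d} (hz : z.norm = 1) :
    3 ∣ z.im := by
  have hd3 : (d : ZMod 3) = 1 := by simpa using (ZMod.intCast_eq_intCast_iff d 1 3).mpr hd
  have hpell : (z.re : ZMod 3) ^ 2 - (z.im : ZMod 3) ^ 2 = 1 := by
    have := congrArg (Int.cast : ℤ → ZMod 3) hz
    rw [norm_def] at this
    push_cast [hd3] at this
    linear_combination this
  exact (ZMod.intCast_zmod_eq_zero_iff_dvd z.im 3).mp
    ((by decide : ∀ a b : ZMod 3, a ^ 2 - b ^ 2 = 1 → b = 0) _ _ hpell)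

theorem three_dvd_im_of_isUnit (hd₇ : 7 ∣ d) (hd₃ : d ≡ 1 [ZMOD 3]) {z : ℤ√d} (hz : IsUnit z) :
    3 ∣ z.im := by
  rw [isUnit_iff_norm_isUnit, Int.isUnit_iff] at hz
  exact three_dvd_im_of_norm_eq_one hd₃ (hz.resolve_right (norm_ne_neg_one_of_seven_dvd hd₇ z))

end Zsqrtd

theorem stmt11 : ¬ ∃ (n : ℕ) (u : Fin n → Zsqrtd (7:ℤ)),
    (∀ i, IsUnit (u i)) ∧ (Zsqrtd.sqrtd : Zsqrtd (7:ℤ)) = ∑ i, u i := by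
  rintro ⟨n, u, hu, hsum⟩
  have hdvd : 3 ∣ (∑ i, u i).im := by
    rw [Zsqrtd.im_sum]
    exact Finset.dvd_sum fun i _ => Zsqrtd.three_dvd_im_of_isUnit (by norm_num) (by decide) (hu i)
  rw [← hsum, Zsqrtd.im_sqrtd] at hdvd
  norm_num at hdvd
end

section
/- Let d > 0 be squarefree and let O be the ring of integers of ℚ(√d). Then there exists a unit of O of the form a + bδ with a, b ∈ ℤ and b ≠ 0, where δ = √d if d ≢ 1 mod 4 and δ = (1+√d)/2 if d ≡ 1 mod 4. -/
/-!
Both shapes of `δ` satisfy `√d = j + k δ` with `j, k ∈ ℤ` and `k ≠ 0`, so `x + y √d` with `y ≠ 0` is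
also of the form `a + b δ` with `b ≠ 0`. For non-square `d > 0`, Pell's equation gives
`x² - d y² = 1` with `y ≠ 0`, and `x + y √d` is a unit with inverse `x - y √d`. For a square `d`,
`√d` and hence `k δ` are integers, so `1` itself can be written as `a + k δ`.
-/

theorem exists_sqrt_eq_int_add_int_mul (d : ℤ) :
    ∃ j k : ℤ, k ≠ 0 ∧
      √(d : ℝ) = j + k * (if d % 4 = 1 then (1 + √(d : ℝ)) / 2 else √(d : ℝ)) := by
  split_ifs
  · exact ⟨-1, 2, two_ne_zero, by push_cast; ring⟩
  · exact ⟨0, 1, one_ne_zero, by simp⟩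

section

variable {d j k : ℤ} {δ : ℝ}

theorem exists_unit_of_isSquare (hk : k ≠ 0) (hδ : √(d : ℝ) = j + k * δ) (hsq : IsSquare d) :
    ∃ a b : ℤ, b ≠ 0 ∧ ∃ c e : ℤ, ((a : ℝ) + b * δ) * (c + e * δ) = 1 := by
  obtain ⟨r, rfl⟩ := hsq
  have hsqrt : √((r * r : ℤ) : ℝ) = |(r : ℝ)| := by
    push_cast
    exact Real.sqrt_mul_self_eq_abs _
  refine ⟨1 + j - |r|, k, hk, 1, 0, ?_⟩
  push_cast
  linear_combination hδ.symm.trans hsqrt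

theorem exists_unit_of_not_isSquare (hd : 0 < d) (hk : k ≠ 0) (hδ : √(d : ℝ) = j + k * δ)
    (hsq : ¬IsSquare d) :
    ∃ a b : ℤ, b ≠ 0 ∧ ∃ c e : ℤ, ((a : ℝ) + b * δ) * (c + e * δ) = 1 := by
  obtain ⟨x, y, hpell, hy⟩ := Pell.exists_of_not_isSquare hd hsq
  have hpell' : (x : ℝ) ^ 2 - d * y ^ 2 = 1 := by exact_mod_cast hpell
  have hsd : √(d : ℝ) * √(d : ℝ) = d := Real.mul_self_sqrt (by positivity)
  refine ⟨x + y * j, y * k, mul_ne_zero hy hk, x - y * j, -(y * k), ?_⟩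
  have hconj : ((x : ℝ) + y * √d) * (x - y * √d) = 1 := by
    linear_combination hpell' - (y : ℝ) ^ 2 * hsd
  rw [hδ] at hconj
  push_cast
  linear_combination hconj

end

theorem stmt13_general (d : ℤ) (hd : 0 < d)
    (δ : ℝ)
    (hδ : δ = if d % 4 = 1 then (1 + Real.sqrt (d : ℝ)) / 2 else Real.sqrt (d : ℝ)) :
    ∃ a b : ℤ, b ≠ 0 ∧ ∃ c e : ℤ,
      ((a : ℝ) + (b : ℝ) * δ) * ((c : ℝ) + (e : ℝ) * δ) = 1 := by
  obtain ⟨j, k, hk, hsqrt⟩ := exists_sqrt_eq_int_add_int_mul d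
  rw [← hδ] at hsqrt
  by_cases hsq : IsSquare d
  · exact exists_unit_of_isSquare hk hsqrt hsq
  · exact exists_unit_of_not_isSquare hd hk hsqrt hsq

theorem stmt13 (d : ℤ) (hd : 0 < d) (hsf : Squarefree d)
    (δ : ℝ)
    (hδ : δ = if d % 4 = 1 then (1 + Real.sqrt (d : ℝ)) / 2 else Real.sqrt (d : ℝ)) :
    ∃ a b : ℤ, b ≠ 0 ∧ ∃ c e : ℤ,
      ((a : ℝ) + (b : ℝ) * δ) * ((c : ℝ) + (e : ℝ) * δ) = 1 :=
  stmt13_general d hd δ hδ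
end
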